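/- For n ≥ 6, the graph G_n minus the edge pq is a maximal planar graph (a triangulation): it is planar with n vertices and exactly 3n − 6 edges. -/

import Mathlib

open SimpleGraph

/-- `H` is a minor of `G`: there are nonempty, pairwise disjoint, connected branch
sets in `G`, one for each vertex of `H`, with an edge of `G` between the branch
sets of any two adjacent vertices of `H`. -/
def IsMinor {W V : Type*} (H : SimpleGraph W) (G : SimpleGraph V) : Prop :=
  ∃ f : W → Set V,
    (∀ w, (f w).Nonempty) ∧
    (∀ w, (G.induce (f w)).Connected) ∧
    (Pairwise fun w₁ w₂ => Disjoint (f w₁) (f w₂)) ∧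
    ∀ ⦃a b⦄, H.Adj a b → ∃ u ∈ f a, ∃ v ∈ f b, G.Adj u v

/-- Planarity, via Wagner's theorem: a graph is planar iff it has neither a `K₅`
minor nor a `K₃,₃` minor. -/
def IsPlanar {V : Type*} (G : SimpleGraph V) : Prop :=
  ¬ IsMinor (completeGraph (Fin 5)) G ∧
  ¬ IsMinor (completeBipartiteGraph (Fin 3) (Fin 3)) G

/-- The join of two graphs: their disjoint union plus all edges in between. -/
def Join {α β : Type*} (G : SimpleGraph α) (H : SimpleGraph β) :
    SimpleGraph (α ⊕ β) where
  Adj x y := match x, y with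
    | .inl a, .inl b => G.Adj a b
    | .inl _, .inr _ => True
    | .inr _, .inl _ => True
    | .inr a, .inr b => H.Adj a b
  symm := ⟨by rintro (a | a) (b | b) h <;> first | exact h.symm | trivial⟩
  loopless := ⟨by rintro (a | a) h <;> exact h.ne rfl⟩

/-- The graph `Gₙ`: a cycle on `n - 2` vertices, two poles `p = Sum.inr 0` and
`q = Sum.inr 1` adjacent to all cycle vertices, and the pole edge `pq`. -/
def Gn (n : ℕ) : SimpleGraph (Fin (n - 2) ⊕ Fin 2) :=
  Join (cycleGraph (n - 2)) (⊤ : SimpleGraph (Fin 2))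


/-!
Deleting `pq` leaves the join of the cycle `C_{n-2}` with two independent poles. In a minor model
of `K₅` or `K₃,₃` in this graph at most two branch sets contain a pole; every other branch set is
a connected set of cycle vertices, and in a graph of maximum degree two a connected set has at
most two exterior neighbours. Hence the pole-free branch sets induce a subgraph of maximum degree
two of the minor, and if that subgraph has minimum degree two, its branch sets cover the whole
cycle, so the branch sets containing a pole contain nothing else and are pairwise non-adjacent.
Neither `K₅` nor `K₃,₃` has a set of at most two vertices with these properties (a finite check).
The edge count `(n - 2) + 2(n - 2)` comes from the handshake lemma.
-/

open Finset

namespace SimpleGraph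

variable {V : Type*} (G : SimpleGraph V)

def exteriorNeighborSet (S : Set V) : Set V := {v | v ∉ S ∧ ∃ u ∈ S, G.Adj u v}

variable {G} [Fintype V] [DecidableRel G.Adj]

/-- A connected set has at least `|S| - 1` inner edges, hence at least `2|S| - 2` inner darts,
while at most `2|S|` darts start in `S`: so at most two darts leave `S`. -/
theorem ncard_exteriorNeighborSet_le_two (hdeg : ∀ v, G.degree v ≤ 2) {S : Set V}
    (hS : (G.induce S).Connected) : (G.exteriorNeighborSet S).ncard ≤ 2 := by
  classical
  set D : Finset G.Dart := {d | d.fst ∈ S}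
  have hD : #D ≤ 2 * #S.toFinset :=
    card_le_mul_card_image_of_maps_to (f := fun d => d.fst) (by simp [D]) 2 fun v _ =>
      calc #{d ∈ D | d.fst = v} ≤ #{d : G.Dart | d.fst = v} := card_le_card (by intro d; simp)
        _ ≤ 2 := (G.dart_fst_fiber_card_eq_degree v).trans_le (hdeg v)
  have hinner : 2 * #(G.induce S).edgeFinset ≤ #{d ∈ D | d.snd ∈ S} := by
    rw [← dart_card_eq_twice_card_edges, ← card_univ]
    refine card_le_card_of_injOn (Embedding.induce S).toHom.mapDart (fun d _ => ?_) ?_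
    · simp [D, Hom.mapDart_apply]
    · intro d₁ _ d₂ _ h
      simp only [Hom.mapDart_apply, Dart.ext_iff, Prod.ext_iff, Prod.map_fst, Prod.map_snd] at h
      exact (Dart.ext_iff _ _).2 (Prod.ext (Subtype.ext h.1) (Subtype.ext h.2))
  have houter : (G.exteriorNeighborSet S).ncard ≤ #{d ∈ D | d.snd ∉ S} := by
    refine (Set.ncard_le_ncard (t := ↑({d ∈ D | d.snd ∉ S}.image fun d => d.snd)) ?_).trans ?_
    · rintro v ⟨hv, u, hu, huv⟩
      simp only [coe_image, coe_filter, Set.mem_image, Set.mem_ofPred_eq]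
      exact ⟨⟨(u, v), huv⟩, ⟨by simpa [D] using hu, hv⟩, rfl⟩
    · rw [Set.ncard_coe_finset]
      exact card_image_le
  have hsplit := card_filter_add_card_filter_not (s := D) (fun d => d.snd ∈ S)
  have htree := hS.card_vert_le_card_edgeSet_add_one
  rw [Nat.card_eq_fintype_card, Nat.card_eq_fintype_card, ← edgeFinset_card,
    ← Set.toFinset_card] at htree
  omega

end SimpleGraph

section Join

variable {α β : Type*} {G : SimpleGraph α} {K : SimpleGraph β}

@[simp] theorem join_adj_inl_inl {a b : α} : (Join G K).Adj (.inl a) (.inl b) ↔ G.Adj a b :=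
  Iff.rfl

@[simp] theorem join_adj_inl_inr {a : α} {b : β} : (Join G K).Adj (.inl a) (.inr b) := trivial

@[simp] theorem join_adj_inr_inl {a : β} {b : α} : (Join G K).Adj (.inr a) (.inl b) := trivial

@[simp] theorem join_adj_inr_inr {a b : β} : (Join G K).Adj (.inr a) (.inr b) ↔ K.Adj a b :=
  Iff.rfl

instance [DecidableRel G.Adj] [DecidableRel K.Adj] : DecidableRel (Join G K).Adj
  | .inl a, .inl b => decidable_of_iff (G.Adj a b) Iff.rfl
  | .inl _, .inr _ => .isTrue trivial
  | .inr _, .inl _ => .isTrue trivial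
  | .inr a, .inr b => decidable_of_iff (K.Adj a b) Iff.rfl

theorem connected_induce_preimage_inl {s : Set (α ⊕ β)} (hs : ∀ b, .inr b ∉ s)
    (hconn : ((Join G K).induce s).Connected) : (G.induce (Sum.inl ⁻¹' s)).Connected := by
  let φ : G →g Join G K := ⟨Sum.inl, id⟩
  have hbij : Function.Bijective (induceHom φ (Set.mapsTo_preimage _ s)) := by
    refine ⟨induceHom_injective φ _ Sum.inl_injective.injOn, ?_⟩
    rintro ⟨a | b, h⟩
    · exact ⟨⟨a, h⟩, rfl⟩
    · exact absurd h (hs b)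
  exact (Iso.connected_iff ⟨Equiv.ofBijective _ hbij, Iff.rfl⟩).2 hconn

theorem exists_mem_exteriorNeighborSet_preimage_inl {s t : Set (α ⊕ β)} (hst : Disjoint s t)
    (hs : ∀ b, .inr b ∉ s) (ht : ∀ b, .inr b ∉ t) (h : ∃ u ∈ s, ∃ v ∈ t, (Join G K).Adj u v) :
    ∃ v ∈ Sum.inl ⁻¹' t, v ∈ G.exteriorNeighborSet (Sum.inl ⁻¹' s) := by
  obtain ⟨u | b, hu, v | b', hv, huv⟩ := h
  · exact ⟨v, hv, fun hv' => hst.ne_of_mem hv' hv rfl, u, hu, huv⟩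
  all_goals first | exact absurd hu (hs _) | exact absurd hv (ht _)

variable [Fintype α] [Fintype β] [DecidableRel G.Adj] [DecidableRel K.Adj]

theorem degree_join_inl (a : α) :
    (Join G K).degree (.inl a) = G.degree a + Fintype.card β := by
  rw [degree, show (Join G K).neighborFinset (.inl a) = (G.neighborFinset a).disjSum univ by
    ext (b | b) <;> simp, card_disjSum, degree, card_univ]

theorem degree_join_inr (b : β) :
    (Join G K).degree (.inr b) = K.degree b + Fintype.card α := by
  rw [degree, show (Join G K).neighborFinset (.inr b) = univ.disjSum (K.neighborFinset b) by
    ext (a | a) <;> simp, card_disjSum, degree, card_univ, add_comm]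

theorem card_edgeFinset_join :
    #(Join G K).edgeFinset = #G.edgeFinset + #K.edgeFinset + Fintype.card α * Fintype.card β := by
  have h := (Join G K).sum_degrees_eq_twice_card_edges
  rw [Fintype.sum_sum_type] at h
  simp only [degree_join_inl, degree_join_inr, sum_add_distrib, sum_const, card_univ,
    smul_eq_mul, G.sum_degrees_eq_twice_card_edges, K.sum_degrees_eq_twice_card_edges] at h
  linarith

end Join

section PoleSet

variable {W : Type*} [Fintype W] [DecidableEq W]

/-- What a minor model of `H` in the join of a connected graph of maximum degree two with two
independent poles forces on `H`; `P` is the set of vertices whose branch sets contain a pole. -/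
def IsPoleSet (H : SimpleGraph W) [DecidableRel H.Adj] (P : Finset W) : Prop :=
  #P ≤ 2 ∧ (∀ w ∉ P, #{v | v ∉ P ∧ H.Adj w v} ≤ 2) ∧
    ((∃ w, w ∉ P) → (∀ w ∉ P, 2 ≤ #{v | v ∉ P ∧ H.Adj w v}) → ∀ a ∈ P, ∀ b ∈ P, ¬H.Adj a b)

instance (H : SimpleGraph W) [DecidableRel H.Adj] : DecidablePred (IsPoleSet H) :=
  fun _ => by unfold IsPoleSet; infer_instance

end PoleSet

instance {V W : Type*} : DecidableRel (completeBipartiteGraph V W).Adj := fun v w =>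
  inferInstanceAs (Decidable ((v.isLeft ∧ w.isRight) ∨ (v.isRight ∧ w.isLeft)))

theorem not_isPoleSet_completeGraph_fin_five (P : Finset (Fin 5)) :
    ¬IsPoleSet (completeGraph (Fin 5)) P := by
  revert P
  decide

theorem not_isPoleSet_completeBipartiteGraph_fin_three (P : Finset (Fin 3 ⊕ Fin 3)) :
    ¬IsPoleSet (completeBipartiteGraph (Fin 3) (Fin 3)) P := by
  revert P
  decide

structure MinorModel {W V : Type*} (H : SimpleGraph W) (G : SimpleGraph V) where
  branch : W → Set V
  branch_nonempty : ∀ w, (branch w).Nonempty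
  connected_induce : ∀ w, (G.induce (branch w)).Connected
  pairwise_disjoint : Pairwise fun w₁ w₂ => Disjoint (branch w₁) (branch w₂)
  exists_adj : ∀ ⦃a b⦄, H.Adj a b → ∃ u ∈ branch a, ∃ v ∈ branch b, G.Adj u v

theorem IsMinor.nonempty_minorModel {W V : Type*} {H : SimpleGraph W} {G : SimpleGraph V}
    (h : IsMinor H G) : Nonempty (MinorModel H G) :=
  let ⟨f, hne, hconn, hdisj, hadj⟩ := h
  ⟨⟨f, hne, hconn, hdisj, hadj⟩⟩

namespace MinorModel

variable {α β W : Type*} {G : SimpleGraph α} {K : SimpleGraph β} {H : SimpleGraph W}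
  (M : MinorModel H (Join G K)) {a b w : W}

def HasPole (w : W) : Prop := ∃ b, Sum.inr b ∈ M.branch w

def leftBranch (w : W) : Set α := Sum.inl ⁻¹' M.branch w

theorem card_hasPole_le [Fintype W] [Fintype β] [DecidablePred M.HasPole] :
    #{w | M.HasPole w} ≤ Fintype.card β := by
  rw [← Fintype.card_subtype]
  choose pole hpole using fun w : {w // M.HasPole w} => w.2
  refine Fintype.card_le_of_injective pole fun w₁ w₂ h => Subtype.ext ?_
  by_contra hne
  exact (M.pairwise_disjoint hne).ne_of_mem (hpole w₁) (h ▸ hpole w₂) rfl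

theorem disjoint_leftBranch (h : a ≠ b) : Disjoint (M.leftBranch a) (M.leftBranch b) :=
  (M.pairwise_disjoint h).preimage _

theorem leftBranch_nonempty (hw : ¬M.HasPole w) : (M.leftBranch w).Nonempty := by
  obtain ⟨u | b, hu⟩ := M.branch_nonempty w
  · exact ⟨u, hu⟩
  · exact absurd ⟨b, hu⟩ hw

theorem connected_leftBranch (hw : ¬M.HasPole w) : (G.induce (M.leftBranch w)).Connected :=
  connected_induce_preimage_inl (not_exists.1 hw) (M.connected_induce w)

theorem exists_mem_leftBranch_exterior (ha : ¬M.HasPole a) (hb : ¬M.HasPole b)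
    (hab : H.Adj a b) : ∃ v ∈ M.leftBranch b, v ∈ G.exteriorNeighborSet (M.leftBranch a) :=
  exists_mem_exteriorNeighborSet_preimage_inl (M.pairwise_disjoint hab.ne)
    (not_exists.1 ha) (not_exists.1 hb) (M.exists_adj hab)

variable [Fintype α] [DecidableRel G.Adj] [Fintype W] [DecidableRel H.Adj]
  [DecidablePred M.HasPole]

theorem card_adj_not_hasPole_le_two (hdeg : ∀ v, G.degree v ≤ 2) (hw : ¬M.HasPole w) :
    #{v | ¬M.HasPole v ∧ H.Adj w v} ≤ 2 := by
  by_contra! hlt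
  obtain ⟨x, hx, y, hy, z, hz, hxy, hxz, hyz⟩ := two_lt_card.1 hlt
  simp only [mem_filter, mem_univ, true_and] at hx hy hz
  obtain ⟨x', hx', hxe⟩ := M.exists_mem_leftBranch_exterior hw hx.1 hx.2
  obtain ⟨y', hy', hye⟩ := M.exists_mem_leftBranch_exterior hw hy.1 hy.2
  obtain ⟨z', hz', hze⟩ := M.exists_mem_leftBranch_exterior hw hz.1 hz.2
  refine (SimpleGraph.ncard_exteriorNeighborSet_le_two hdeg (M.connected_leftBranch hw)).not_gt
    ((Set.two_lt_ncard_iff (Set.toFinite _)).2 ⟨x', y', z', hxe, hye, hze, ?_, ?_, ?_⟩)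
  · exact (M.disjoint_leftBranch hxy).ne_of_mem hx' hy'
  · exact (M.disjoint_leftBranch hxz).ne_of_mem hx' hz'
  · exact (M.disjoint_leftBranch hyz).ne_of_mem hy' hz'

/-- An uncovered vertex would be reachable from a covered one, and the boundary edge would give
some pole-free branch set a third exterior neighbour. -/
theorem exists_mem_leftBranch_of_two_le_card_adj (hG : G.Connected) (hdeg : ∀ v, G.degree v ≤ 2)
    (h₀ : ∃ w, ¬M.HasPole w) (h₂ : ∀ w, ¬M.HasPole w → 2 ≤ #{v | ¬M.HasPole v ∧ H.Adj w v})
    (x : α) : ∃ w, ¬M.HasPole w ∧ x ∈ M.leftBranch w := by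
  set U := {x | ∃ w, ¬M.HasPole w ∧ x ∈ M.leftBranch w}
  by_contra hx
  obtain ⟨w₀, hw₀⟩ := h₀
  obtain ⟨x₀, hx₀⟩ := M.leftBranch_nonempty hw₀
  obtain ⟨d, -, ⟨w, hw, hd⟩, hdU⟩ := (hG.preconnected x₀ x).some.exists_boundary_dart U
    ⟨w₀, hw₀, hx₀⟩ hx
  obtain ⟨w₁, hw₁, w₂, hw₂, hne⟩ := one_lt_card.1 (h₂ w hw)
  simp only [mem_filter, mem_univ, true_and] at hw₁ hw₂
  obtain ⟨v₁, hv₁, hv₁e⟩ := M.exists_mem_leftBranch_exterior hw hw₁.1 hw₁.2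
  obtain ⟨v₂, hv₂, hv₂e⟩ := M.exists_mem_leftBranch_exterior hw hw₂.1 hw₂.2
  have hde : d.snd ∈ G.exteriorNeighborSet (M.leftBranch w) :=
    ⟨fun h => hdU ⟨w, hw, h⟩, d.fst, hd, d.adj⟩
  refine (SimpleGraph.ncard_exteriorNeighborSet_le_two hdeg (M.connected_leftBranch hw)).not_gt
    ((Set.two_lt_ncard_iff (Set.toFinite _)).2 ⟨v₁, v₂, d.snd, hv₁e, hv₂e, hde, ?_, ?_, ?_⟩)
  · exact (M.disjoint_leftBranch hne).ne_of_mem hv₁ hv₂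
  · exact fun h => hdU ⟨w₁, hw₁.1, h ▸ hv₁⟩
  · exact fun h => hdU ⟨w₂, hw₂.1, h ▸ hv₂⟩

end MinorModel

theorem MinorModel.not_adj_of_hasPole {α β W : Type*} {G : SimpleGraph α} {H : SimpleGraph W}
    (M : MinorModel H (Join G (⊥ : SimpleGraph β)))
    (hcover : ∀ x, ∃ w, ¬M.HasPole w ∧ x ∈ M.leftBranch w) {a b : W} (ha : M.HasPole a)
    (hb : M.HasPole b) : ¬H.Adj a b := by
  have hfree : ∀ c, M.HasPole c → ∀ x, .inl x ∉ M.branch c := fun c hc x hx => by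
    obtain ⟨w, hw, hxw⟩ := hcover x
    exact (M.pairwise_disjoint fun (h : c = w) => hw (h ▸ hc)).ne_of_mem hx hxw rfl
  intro hab
  obtain ⟨u | u, hu, v | v, hv, huv⟩ := M.exists_adj hab
  all_goals first | exact hfree a ha _ hu | exact hfree b hb _ hv | exact huv

theorem exists_isPoleSet_of_isMinor {α β W : Type*} [Fintype α] [Fintype β] [Fintype W]
    [DecidableEq W] {G : SimpleGraph α} [DecidableRel G.Adj] {H : SimpleGraph W}
    [DecidableRel H.Adj] (hβ : Fintype.card β ≤ 2) (hG : G.Connected)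
    (hdeg : ∀ v, G.degree v ≤ 2) (h : IsMinor H (Join G (⊥ : SimpleGraph β))) :
    ∃ P, IsPoleSet H P := by
  classical
  obtain ⟨M⟩ := h.nonempty_minorModel
  refine ⟨({w | M.HasPole w} : Finset W), M.card_hasPole_le.trans hβ, fun w hw => ?_,
    fun h₀ h₂ a ha b hb => ?_⟩
  · simpa using M.card_adj_not_hasPole_le_two hdeg (by simpa using hw)
  · refine M.not_adj_of_hasPole (M.exists_mem_leftBranch_of_two_le_card_adj hG hdeg
      (by simpa using h₀) fun w hw => ?_) (by simpa using ha) (by simpa using hb)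
    simpa using h₂ w (by simpa using hw)

theorem isPlanar_join_bot {α β : Type*} [Fintype α] [Fintype β] {G : SimpleGraph α}
    [DecidableRel G.Adj] (hβ : Fintype.card β ≤ 2) (hG : G.Connected)
    (hdeg : ∀ v, G.degree v ≤ 2) : IsPlanar (Join G (⊥ : SimpleGraph β)) := by
  classical
  refine ⟨fun h => ?_, fun h => ?_⟩
  · obtain ⟨P, hP⟩ := exists_isPoleSet_of_isMinor hβ hG hdeg h
    exact not_isPoleSet_completeGraph_fin_five P hP
  · obtain ⟨P, hP⟩ := exists_isPoleSet_of_isMinor hβ hG hdeg h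
    exact not_isPoleSet_completeBipartiteGraph_fin_three P hP

theorem cycleGraph_degree_le_two {m : ℕ} (v : Fin (m + 2)) : (cycleGraph (m + 2)).degree v ≤ 2 :=
  cycleGraph_degree_two_le ▸ card_le_two

theorem card_edgeFinset_cycleGraph (m : ℕ) : #(cycleGraph (m + 3)).edgeFinset = m + 3 := by
  have h := (cycleGraph (m + 3)).sum_degrees_eq_twice_card_edges
  simp only [cycleGraph_degree_three_le, sum_const, card_univ, Fintype.card_fin,
    smul_eq_mul] at h
  omega

theorem Gn_deleteEdges_poleEdge (n : ℕ) :
    (Gn n).deleteEdges {s(Sum.inr 0, Sum.inr 1)} =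
      Join (cycleGraph (n - 2)) (⊥ : SimpleGraph (Fin 2)) := by
  ext (a | a) (b | b) <;> simp [Gn]
  omega

/-- For `n ≥ 6`, `Gₙ` minus the pole edge `pq` is a maximal planar
graph (triangulation): it is planar, has `n` vertices and exactly `3n - 6` edges. -/
theorem Gn_minus_pq_triangulation (n : ℕ) (hn : 6 ≤ n) :
    IsPlanar ((Gn n).deleteEdges {s(Sum.inr 0, Sum.inr 1)}) ∧
    Fintype.card (Fin (n - 2) ⊕ Fin 2) = n ∧
    ((Gn n).deleteEdges {s(Sum.inr 0, Sum.inr 1)}).edgeSet.ncard = 3 * n - 6 := by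
  obtain ⟨m, hm⟩ : ∃ m, n - 2 = m + 3 := ⟨n - 5, by omega⟩
  rw [Gn_deleteEdges_poleEdge, hm]
  refine ⟨isPlanar_join_bot (by simp) cycleGraph_connected cycleGraph_degree_le_two,
    by simp only [Fintype.card_sum, Fintype.card_fin]; omega, ?_⟩
  rw [Set.ncard_eq_toFinset_card', Set.toFinset_card, ← edgeFinset_card, card_edgeFinset_join,
    card_edgeFinset_cycleGraph]
  simp only [edgeFinset_card, edgeSet_bot, Fintype.card_eq_zero, add_zero, Fintype.card_fin]
  omega
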